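/- arXiv:math/0302309 — 2 statements merged into one kernel-verified Lean document; each statement's English description precedes it below -/
import Mathlib

section
/- Let (W,S) be a finite Coxeter system and suppose S = K₁ ⊔ K₂ is a disjoint union such that every element of K₁ commutes with every element of K₂ (so W = W_{K₁} × W_{K₂} internally). For I ⊆ S write I_p = I ∩ K_p for p = 1,2, and for a Coxeter class λ ∈ Λ(W) with I ∈ λ set π_p(λ) = λ(I_p) ∈ Λ(W_{K_p}), the Coxeter class of I_p in the Coxeter system (W_{K_p}, K_p). Then π_p is well defined (independent of the choice of I ∈ λ), the map π : Λ(W) → Λ(W_{K₁}) × Λ(W_{K₂}) given by π(λ) = (π₁(λ), π₂(λ)) is a bijection, and for every λ ∈ Λ(W) one has |C(λ)| = |C(π₁(λ))| · |C(π₂(λ))|, where C(π_p(λ)) denotes the π_p(λ)-set inside W_{K_p}. -/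
open scoped Classical

variable {B : Type*} {W : Type*} [Group W] {M : CoxeterMatrix B}

/-- The parabolic subgroup `W_I` generated by the simple reflections indexed by `I`. -/
def parabolic (cs : CoxeterSystem M W) (I : Set B) : Subgroup W :=
  Subgroup.closure (cs.simple '' I)

/-- `X_I`: minimal length coset representatives of `W / W_I`. -/
def minReps (cs : CoxeterSystem M W) (I : Set B) : Set W :=
  {w : W | ∀ i ∈ I, cs.length w < cs.length (w * cs.simple i)}

/-- `I ∼_W J`: the subsets of simple reflections are conjugate under `W`. -/
def ConjSubsets (cs : CoxeterSystem M W) (I J : Set B) : Prop :=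
  ∃ w : W, (fun x => w * x * w⁻¹) '' (cs.simple '' I) = cs.simple '' J

theorem conjSubsets_equivalence (cs : CoxeterSystem M W) : Equivalence (ConjSubsets cs) where
  refl I := ⟨1, by simp⟩
  symm := by
    rintro I J ⟨w, h⟩
    refine ⟨w⁻¹, ?_⟩
    rw [← h, Set.image_image]
    simp [mul_assoc]
  trans := by
    rintro I J K ⟨w, h⟩ ⟨v, h'⟩
    refine ⟨v * w, ?_⟩
    rw [← h', ← h]
    simp [Set.image_image, mul_assoc]

/-- The setoid of Coxeter classes. -/
def coxSetoid (cs : CoxeterSystem M W) : Setoid (Set B) :=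
  ⟨ConjSubsets cs, conjSubsets_equivalence cs⟩

/-- The set of Coxeter classes `Λ(W)`. -/
def CoxeterClass (cs : CoxeterSystem M W) := Quotient (coxSetoid cs)

/-- `C` is a conjugacy class of the parabolic subgroup `W_I`. -/
def IsConjClassOfParabolic (cs : CoxeterSystem M W) (I : Set B) (C : Set W) : Prop :=
  ∃ v ∈ parabolic cs I, C = {x : W | ∃ u ∈ parabolic cs I, u * v * u⁻¹ = x}

/-- `C` is an `I`-cuspidal class: a conjugacy class of `W_I` meeting no proper
parabolic subgroup of `W_I`. -/
def IsCuspidalClass (cs : CoxeterSystem M W) (I : Set B) (C : Set W) : Prop :=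
  IsConjClassOfParabolic cs I C ∧ ∀ K : Set B, K ⊂ I → C ∩ (parabolic cs K : Set W) = ∅

/-- `w` is an `I`-element: `C(w) ∩ W_I` is an `I`-cuspidal class. -/
def IsElementOf (cs : CoxeterSystem M W) (I : Set B) (w : W) : Prop :=
  IsCuspidalClass cs I ({x : W | IsConj w x} ∩ (parabolic cs I : Set W))

/-- The λ-set `C(λ)` of the Coxeter class of `I`: the set of `λ(I)`-elements. -/
def lambdaSet (cs : CoxeterSystem M W) (I : Set B) : Set W :=
  {w : W | ∃ J : Set B, ConjSubsets cs I J ∧ IsElementOf cs J w}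

/-- The λ-set of a Coxeter class. -/
def lambdaSetQ (cs : CoxeterSystem M W) (lam : CoxeterClass cs) : Set W :=
  {w : W | ∃ I : Set B, Quotient.mk (coxSetoid cs) I = lam ∧ IsElementOf cs I w}

/-- The induced character `1_{W_I}^W` of the trivial character of `W_I`,
as a `ℚ`-valued function on `W`. -/
noncomputable def indTriv (cs : CoxeterSystem M W) (I : Set B) : W → ℚ :=
  fun w => (Nat.card {g : W | g ∈ minReps cs I ∧ g⁻¹ * w * g ∈ parabolic cs I} : ℚ)

/-- `I ∼_{W_K} J`: conjugation by an element of the parabolic subgroup `W_K`. -/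
def ConjSubsetsIn (cs : CoxeterSystem M W) (K I J : Set B) : Prop :=
  ∃ w ∈ parabolic cs K, (fun x => w * x * w⁻¹) '' (cs.simple '' I) = cs.simple '' J

/-- The setoid of Coxeter classes of the parabolic Coxeter system `(W_K, K)`. -/
def coxSetoidIn (cs : CoxeterSystem M W) (K : Set B) : Setoid {I : Set B // I ⊆ K} :=
  ⟨fun I J => ConjSubsetsIn cs K I.1 J.1, by
    constructor
    · intro I; exact ⟨1, one_mem _, by simp⟩
    · rintro I J ⟨w, hw, h⟩
      refine ⟨w⁻¹, inv_mem hw, ?_⟩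
      rw [← h]
      simp [Set.image_image, mul_assoc]
    · rintro I J K' ⟨w, hw, h⟩ ⟨v, hv, h'⟩
      refine ⟨v * w, mul_mem hv hw, ?_⟩
      rw [← h', ← h]
      simp [Set.image_image, mul_assoc]⟩

/-- The set of Coxeter classes of the parabolic Coxeter system `(W_K, K)`. -/
def CoxeterClassIn (cs : CoxeterSystem M W) (K : Set B) := Quotient (coxSetoidIn cs K)

/-- `w` is an `I`-element of the parabolic Coxeter system `(W_K, K)` (`I ⊆ K`). -/
def IsElementIn (cs : CoxeterSystem M W) (K I : Set B) (w : W) : Prop :=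
  w ∈ parabolic cs K ∧
    IsCuspidalClass cs I
      ({x : W | ∃ u ∈ parabolic cs K, u * w * u⁻¹ = x} ∩ (parabolic cs I : Set W))

/-- The λ-set of a Coxeter class of the parabolic Coxeter system `(W_K, K)`. -/
def lambdaSetInQ (cs : CoxeterSystem M W) (K : Set B) (lam : CoxeterClassIn cs K) : Set W :=
  {w : W | ∃ I : {I : Set B // I ⊆ K},
    Quotient.mk (coxSetoidIn cs K) I = lam ∧ IsElementIn cs K I.1 w}

/-!
If every simple reflection in `K` commutes with every simple reflection outside `K`, then
`m_ij = 2` across `K` (the geometric representation sees the true order of `s_i s_j`), so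
`s_i ↦ s_i` for `i ∈ K` and `s_j ↦ 1` for `j ∉ K` extends to a retraction `W → W_K`. Together
with the retraction onto `W_{Kᶜ}` it identifies `W` with `W_K × W_{Kᶜ}`. Under this identification
conjugation of subsets of `S`, parabolic subgroups, conjugacy classes and therefore cuspidal
classes all split as products, so `λ ↦ (π₁ λ, π₂ λ)` is a bijection and every `λ`-set is the
product of the two component `λ`-sets.
-/

theorem Module.End.pow_apply_of_apply_eq_add {R A V : Type*} [CommRing R] [Ring A] [Algebra R A]
    [AddCommGroup V] [Module R V] {T : Module.End R V} {ι : A →ₗ[R] V} {ψ : V →ₗ[R] A} {z : A}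
    (hψι : ∀ x, ψ (ι x) = x) (hT : ∀ v, T v = v + ι ((z - 1) * ψ v)) (n : ℕ) (v : V) :
    (T ^ n) v = v + ι ((z ^ n - 1) * ψ v) := by
  induction n generalizing v with
  | zero => simp
  | succ n ih =>
    have hψT : ψ (T v) = z * ψ v := by rw [hT, map_add, hψι]; noncomm_ring
    rw [pow_succ, Module.End.mul_apply, ih, hψT, hT, add_assoc, ← map_add]
    congr 2
    noncomm_ring

lemma Complex.cos_add_sin_mul_I_pi_div_pow {m : ℕ} (hm : m ≠ 0) :
    ((Real.cos (Real.pi / m) : ℂ) + Real.sin (Real.pi / m) * Complex.I) ^ m = -1 := by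
  have hmθ : (m : ℂ) * ((Real.pi / m : ℝ) : ℂ) = Real.pi := by
    push_cast
    field_simp
  rw [Complex.ofReal_cos, Complex.ofReal_sin, Complex.cos_add_sin_mul_I_pow, hmθ, Complex.cos_pi,
    Complex.sin_pi, zero_mul, add_zero]

namespace CoxeterMatrix

variable (M)

/-- For `M a b = 0` (that is, `m_ab = ∞`) the junk value `π / 0 = 0` gives the correct
coefficient `-2`. -/
noncomputable def geomCoeff (a b : B) : ℝ := -(2 * Real.cos (Real.pi / M a b))

noncomputable def geomCoroot (a : B) : (B →₀ ℝ) →ₗ[ℝ] ℝ :=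
  Finsupp.linearCombination ℝ (M.geomCoeff a)

noncomputable def geomReflection (a : B) : Module.End ℝ (B →₀ ℝ) :=
  LinearMap.id - (M.geomCoroot a).smulRight (Finsupp.single a 1)

lemma geomCoeff_self (a : B) : M.geomCoeff a a = 2 := by
  simp [geomCoeff]

lemma geomCoeff_comm (a b : B) : M.geomCoeff a b = M.geomCoeff b a := by
  rw [geomCoeff, geomCoeff, M.symmetric]

@[simp]
lemma geomCoroot_single (a b : B) (r : ℝ) :
    M.geomCoroot a (Finsupp.single b r) = r * M.geomCoeff a b := by
  simp [geomCoroot]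

lemma geomReflection_apply (a : B) (v : B →₀ ℝ) :
    M.geomReflection a v = v - M.geomCoroot a v • Finsupp.single a 1 := rfl

lemma geomReflection_mul_self (a : B) : M.geomReflection a * M.geomReflection a = 1 := by
  refine LinearMap.ext fun v => ?_
  simp only [Module.End.mul_apply, geomReflection_apply, map_sub, map_smul, geomCoroot_single,
    geomCoeff_self, Module.End.one_apply]
  module

lemma geomReflection_mul_apply (a b : B) (v : B →₀ ℝ) :
    (M.geomReflection a * M.geomReflection b) v =
      v - (M.geomCoroot a v - M.geomCoeff a b * M.geomCoroot b v) • Finsupp.single a 1 -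
        M.geomCoroot b v • Finsupp.single b 1 := by
  simp only [Module.End.mul_apply, geomReflection_apply, map_sub, map_smul, geomCoroot_single]
  module

/-- `ι` identifies `ℂ` with the plane spanned by `e_a, e_b` (`e_a ↦ 1`, `e_b ↦ -exp(-iπ/m)`),
`ψ` is a left inverse of `ι`, and `σ_a σ_b` acts as the rotation `z ↦ exp(2πi/m) z` on the
plane and as the identity modulo the plane. -/
lemma exists_geomReflection_mul_apply_eq {a b : B} (hab : a ≠ b) (h0 : M a b ≠ 0) :
    ∃ (ι : ℂ →ₗ[ℝ] B →₀ ℝ) (ψ : (B →₀ ℝ) →ₗ[ℝ] ℂ), (∀ z, ψ (ι z) = z) ∧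
      ∀ v, (M.geomReflection a * M.geomReflection b) v =
        v + ι (((Real.cos (Real.pi / M a b) + Real.sin (Real.pi / M a b) * Complex.I) ^ 2 - 1) *
          ψ v) := by
  set c := Real.cos (Real.pi / M a b)
  set s := Real.sin (Real.pi / M a b)
  have hs : s ≠ 0 := by
    have hm2 : (2 : ℝ) ≤ M a b := by exact_mod_cast (by have := M.off_diagonal a b hab; omega)
    have : Real.pi / M a b ≤ Real.pi / 2 := div_le_div_of_nonneg_left Real.pi_pos.le two_pos hm2
    exact (Real.sin_pos_of_pos_of_lt_pi (by positivity) (by linarith [Real.pi_pos])).ne'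
  have hcs : c ^ 2 + s ^ 2 = 1 := Real.cos_sq_add_sin_sq _
  have hκ : M.geomCoeff a b = -(2 * c) := rfl
  let ψ : (B →₀ ℝ) →ₗ[ℝ] ℂ :=
    (M.geomCoroot a).smulRight ⟨1 / 2, c / (2 * s)⟩ + (M.geomCoroot b).smulRight ⟨0, 1 / (2 * s)⟩
  let ι : ℂ →ₗ[ℝ] B →₀ ℝ :=
    Complex.reLm.smulRight (Finsupp.single a 1) +
      Complex.imLm.smulRight ((c / s) • Finsupp.single a 1 + (1 / s) • Finsupp.single b 1)
  have hψ : ∀ v,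
      ψ v = ⟨M.geomCoroot a v / 2, (M.geomCoroot b v + c * M.geomCoroot a v) / (2 * s)⟩ := by
    intro v
    simp only [ψ, LinearMap.add_apply, LinearMap.smulRight_apply, Complex.ext_iff, Complex.add_re,
      Complex.add_im, Complex.real_smul, Complex.re_ofReal_mul, Complex.im_ofReal_mul]
    constructor <;> ring
  have hι : ∀ z : ℂ,
      ι z = (z.re + c / s * z.im) • Finsupp.single a 1 + (z.im / s) • Finsupp.single b 1 := by
    intro z
    simp only [ι, LinearMap.add_apply, LinearMap.smulRight_apply, Complex.reLm_coe,
      Complex.imLm_coe]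
    module
  refine ⟨ι, ψ, fun z => ?_, fun v => ?_⟩
  · simp only [hψ, hι, map_add, map_smul, geomCoroot_single, geomCoeff_self, hκ,
      M.geomCoeff_comm b a, smul_eq_mul, Complex.ext_iff]
    constructor
    · field_simp
      ring
    · field_simp
      linear_combination (-z.im) * hcs
  · have hz : ((c + s * Complex.I) ^ 2 - 1) * ψ v =
        ⟨-(M.geomCoroot a v + c * M.geomCoroot b v), -(s * M.geomCoroot b v)⟩ := by
      rw [hψ]
      apply Complex.ext
      · simp [pow_two]
        field_simp
        linear_combination (-M.geomCoroot a v) * hcs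
      · simp [pow_two]
        field_simp
        linear_combination (c * M.geomCoroot a v + M.geomCoroot b v) * hcs
    rw [hz, hι, geomReflection_mul_apply, hκ]
    match_scalars
    · rfl
    · field_simp
      ring
    · field_simp

lemma geomReflection_mul_pow {a b : B} (hab : a ≠ b) (h0 : M a b ≠ 0) :
    (M.geomReflection a * M.geomReflection b) ^ M a b = 1 := by
  obtain ⟨ι, ψ, hψι, hT⟩ := M.exists_geomReflection_mul_apply_eq hab h0
  refine LinearMap.ext fun v => ?_
  rw [Module.End.pow_apply_of_apply_eq_add hψι hT, ← pow_mul, mul_comm 2, pow_mul,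
    Complex.cos_add_sin_mul_I_pi_div_pow h0]
  simp

lemma isLiftable_geomReflection : M.IsLiftable M.geomReflection := by
  intro a b
  by_cases hab : a = b
  · rw [hab, M.diagonal, pow_one, geomReflection_mul_self]
  · by_cases h0 : M a b = 0
    · rw [h0, pow_zero]
    · exact M.geomReflection_mul_pow hab h0

end CoxeterMatrix

namespace CoxeterSystem

variable (cs : CoxeterSystem M W)

noncomputable def geomRepresentation : W →* Module.End ℝ (B →₀ ℝ) :=
  cs.lift ⟨M.geomReflection, M.isLiftable_geomReflection⟩

lemma coxeterMatrix_eq_two_of_commute {i j : B} (hij : i ≠ j)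
    (h : Commute (cs.simple i) (cs.simple j)) : M i j = 2 := by
  have hσ := congr($((h.map cs.geomRepresentation).eq) (Finsupp.single i 1) j)
  simp only [geomRepresentation, lift_apply_simple, CoxeterMatrix.geomReflection_mul_apply,
    CoxeterMatrix.geomCoroot_single, CoxeterMatrix.geomCoeff_self, Finsupp.coe_sub,
    Finsupp.coe_smul, Pi.sub_apply, Pi.smul_apply, Finsupp.single_eq_same,
    Finsupp.single_eq_of_ne' hij, smul_eq_mul] at hσ
  have hcos : Real.cos (Real.pi / M i j) = 0 := by
    rw [M.geomCoeff_comm j i, CoxeterMatrix.geomCoeff] at hσ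
    linarith
  have h0 : M i j ≠ 0 := fun h0 => by simp [h0] at hcos
  have h1 : M i j ≠ 1 := M.off_diagonal i j hij
  by_contra h2
  have hpos : 0 < Real.pi / M i j := div_pos Real.pi_pos (by positivity)
  have hlt : Real.pi / M i j < Real.pi / 2 :=
    div_lt_div_of_pos_left Real.pi_pos two_pos (by exact_mod_cast (by omega : 2 < M i j))
  linarith [Real.cos_pos_of_mem_Ioo ⟨by linarith, hlt⟩]

lemma simple_ne_one (i : B) : cs.simple i ≠ 1 := by
  intro h
  simpa [h] using cs.length_simple i

end CoxeterSystem

lemma simple_mem_parabolic (cs : CoxeterSystem M W) {I : Set B} {i : B} (hi : i ∈ I) :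
    cs.simple i ∈ parabolic cs I :=
  Subgroup.subset_closure ⟨i, hi, rfl⟩

lemma parabolic_mono (cs : CoxeterSystem M W) {I J : Set B} (h : I ⊆ J) :
    parabolic cs I ≤ parabolic cs J :=
  Subgroup.closure_mono (Set.image_mono h)

lemma parabolic_univ (cs : CoxeterSystem M W) : parabolic cs Set.univ = ⊤ := by
  rw [parabolic, Set.image_univ, cs.subgroup_closure_range_simple]

def parabolicConjClass (cs : CoxeterSystem M W) (I : Set B) (v : W) : Set W :=
  {x : W | ∃ u ∈ parabolic cs I, u * v * u⁻¹ = x}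

lemma mem_parabolicConjClass_self (cs : CoxeterSystem M W) (I : Set B) (v : W) :
    v ∈ parabolicConjClass cs I v :=
  ⟨1, one_mem _, by group⟩

lemma parabolicConjClass_subset (cs : CoxeterSystem M W) {I : Set B} {v : W}
    (hv : v ∈ parabolic cs I) : parabolicConjClass cs I v ⊆ parabolic cs I := by
  rintro _ ⟨u, hu, rfl⟩
  exact mul_mem (mul_mem hu hv) (inv_mem hu)

lemma IsConjClassOfParabolic.subset {cs : CoxeterSystem M W} {I : Set B} {C : Set W}
    (h : IsConjClassOfParabolic cs I C) : C ⊆ parabolic cs I := by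
  obtain ⟨v, hv, rfl⟩ := h
  exact parabolicConjClass_subset cs hv

lemma IsConjClassOfParabolic.nonempty {cs : CoxeterSystem M W} {I : Set B} {C : Set W}
    (h : IsConjClassOfParabolic cs I C) : C.Nonempty := by
  obtain ⟨v, -, rfl⟩ := h
  exact ⟨v, mem_parabolicConjClass_self cs I v⟩

def classOfInter (cs : CoxeterSystem M W) (K I : Set B) : CoxeterClassIn cs K :=
  Quotient.mk (coxSetoidIn cs K) ⟨I ∩ K, Set.inter_subset_right⟩

lemma lambdaSetInQ_subset_parabolic (cs : CoxeterSystem M W) (K : Set B)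
    (lam : CoxeterClassIn cs K) : lambdaSetInQ cs K lam ⊆ parabolic cs K :=
  fun _ ⟨_, _, hw⟩ => hw.1

lemma Set.union_inter_eq_left_of_subset_compl {α : Type*} {A B K : Set α} (hA : A ⊆ K)
    (hB : B ⊆ Kᶜ) : (A ∪ B) ∩ K = A := by
  rw [Set.union_inter_distrib_right, Set.inter_eq_left.2 hA, Set.union_eq_left]
  exact fun x hx => absurd hx.2 (hB hx.1)

lemma Set.union_inter_compl_eq_right {α : Type*} {A B K : Set α} (hA : A ⊆ K)
    (hB : B ⊆ Kᶜ) : (A ∪ B) ∩ Kᶜ = B := by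
  rw [Set.union_comm, Set.union_inter_eq_left_of_subset_compl hB (by rwa [compl_compl])]

lemma Set.exists_ssubset_inter_eq {α : Type*} {A J K : Set α} (hA : A ⊂ J ∩ K) :
    ∃ L ⊂ J, L ∩ K = A ∧ L ∩ Kᶜ = J ∩ Kᶜ := by
  have hAK : A ⊆ K := hA.subset.trans Set.inter_subset_right
  have hL1 := Set.union_inter_eq_left_of_subset_compl hAK (Set.inter_subset_right (s := J))
  have hL2 := Set.union_inter_compl_eq_right hAK (Set.inter_subset_right (s := J))
  refine ⟨A ∪ J ∩ Kᶜ, Set.ssubset_iff_subset_ne.2 ⟨?_, fun h => hA.ne ?_⟩, hL1, hL2⟩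
  · exact Set.union_subset (hA.subset.trans Set.inter_subset_left) Set.inter_subset_left
  · rw [← hL1, h]

lemma Set.inter_ssubset_or_inter_compl_ssubset {α : Type*} {L J : Set α} (h : L ⊂ J) (K : Set α) :
    L ∩ K ⊂ J ∩ K ∨ L ∩ Kᶜ ⊂ J ∩ Kᶜ := by
  rcases (Set.inter_subset_inter_left K h.subset).eq_or_ssubset with h1 | h1
  · rcases (Set.inter_subset_inter_left Kᶜ h.subset).eq_or_ssubset with h2 | h2
    · exact absurd (by rw [← Set.inter_union_compl L K, h1, h2, Set.inter_union_compl]) h.ne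
    · exact Or.inr h2
  · exact Or.inl h1

def IsDirectFactor (cs : CoxeterSystem M W) (K : Set B) : Prop :=
  ∀ i ∈ K, ∀ j ∉ K, Commute (cs.simple i) (cs.simple j)

namespace IsDirectFactor

variable {cs : CoxeterSystem M W} {K : Set B} (hK : IsDirectFactor cs K)
include hK

lemma compl : IsDirectFactor cs Kᶜ :=
  fun i hi j hj => (hK j (not_not.mp hj) i hi).symm

lemma commute_of_mem_parabolic {x y : W} (hx : x ∈ parabolic cs K) (hy : y ∈ parabolic cs Kᶜ) :
    Commute x y := by
  have : parabolic cs K ≤ Subgroup.centralizer (parabolic cs Kᶜ) := by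
    rw [parabolic, parabolic, Subgroup.centralizer_closure, Subgroup.closure_le]
    rintro _ ⟨i, hi, rfl⟩ _ ⟨j, hj, rfl⟩
    exact (hK i hi j hj).symm
  exact (Subgroup.mem_centralizer_iff.mp (this hx) y hy).symm

lemma isLiftable_proj :
    M.IsLiftable (fun i => if i ∈ K then cs.simple i else 1) := by
  intro i j
  have h2 : ∀ {i j}, i ∈ K → j ∉ K → M i j = 2 := fun hi hj =>
    cs.coxeterMatrix_eq_two_of_commute (ne_of_mem_of_not_mem hi hj) (hK _ hi _ hj)
  by_cases hi : i ∈ K <;> by_cases hj : j ∈ K <;> simp only [hi, hj, if_true, if_false]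
  · exact cs.simple_mul_simple_pow i j
  · rw [mul_one, h2 hi hj, cs.simple_sq]
  · rw [one_mul, M.symmetric, h2 hj hi, cs.simple_sq]
  · rw [mul_one, one_pow]

noncomputable def proj : W →* W :=
  cs.lift ⟨fun i => if i ∈ K then cs.simple i else 1, hK.isLiftable_proj⟩

lemma proj_simple (i : B) : hK.proj (cs.simple i) = if i ∈ K then cs.simple i else 1 :=
  cs.lift_apply_simple _ i

lemma proj_mem_parabolic_inter {J : Set B} {w : W} (hw : w ∈ parabolic cs J) :
    hK.proj w ∈ parabolic cs (J ∩ K) := by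
  suffices parabolic cs J ≤ (parabolic cs (J ∩ K)).comap hK.proj from this hw
  rw [parabolic, Subgroup.closure_le]
  rintro _ ⟨i, hi, rfl⟩
  rw [SetLike.mem_coe, Subgroup.mem_comap, proj_simple]
  split_ifs with hiK
  · exact simple_mem_parabolic cs ⟨hi, hiK⟩
  · exact one_mem _

lemma proj_mem (w : W) : hK.proj w ∈ parabolic cs K := by
  simpa using hK.proj_mem_parabolic_inter (by simp [parabolic_univ] : w ∈ parabolic cs Set.univ)

lemma proj_eq_self {w : W} (hw : w ∈ parabolic cs K) : hK.proj w = w := by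
  suffices parabolic cs K ≤ hK.proj.eqLocus (MonoidHom.id W) from this hw
  rw [parabolic, Subgroup.closure_le]
  rintro _ ⟨i, hi, rfl⟩
  exact (hK.proj_simple i).trans (if_pos hi)

lemma proj_eq_one {w : W} (hw : w ∈ parabolic cs Kᶜ) : hK.proj w = 1 := by
  suffices parabolic cs Kᶜ ≤ hK.proj.ker from this hw
  rw [parabolic, Subgroup.closure_le]
  rintro _ ⟨i, hi, rfl⟩
  simp [proj_simple, Set.notMem_of_mem_compl hi]

lemma proj_mul_proj_compl (w : W) : hK.proj w * hK.compl.proj w = w := by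
  induction w using cs.simple_induction with
  | simple i => by_cases hi : i ∈ K <;> simp [proj_simple, hi]
  | one => simp
  | mul w w' hw hw' =>
    have hc := hK.commute_of_mem_parabolic (hK.proj_mem w') (hK.compl.proj_mem w)
    rw [map_mul, map_mul, mul_assoc, ← mul_assoc (hK.proj w'), hc.eq, mul_assoc, ← mul_assoc, hw,
      hw']

lemma proj_mul_of_mem {a b : W} (ha : a ∈ parabolic cs K) (hb : b ∈ parabolic cs Kᶜ) :
    hK.proj (a * b) = a := by
  rw [map_mul, hK.proj_eq_self ha, hK.proj_eq_one hb, mul_one]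

lemma proj_compl_mul_of_mem {a b : W} (ha : a ∈ parabolic cs K) (hb : b ∈ parabolic cs Kᶜ) :
    hK.compl.proj (a * b) = b := by
  rw [map_mul, hK.compl.proj_eq_one (by rwa [compl_compl]), hK.compl.proj_eq_self hb, one_mul]

lemma simple_mem_parabolic_iff {i : B} : cs.simple i ∈ parabolic cs K ↔ i ∈ K := by
  refine ⟨fun h => ?_, simple_mem_parabolic cs⟩
  by_contra hi
  have h1 := hK.compl.proj_eq_one (by rwa [compl_compl] : cs.simple i ∈ parabolic cs Kᶜᶜ)
  rw [proj_simple, if_pos (show i ∈ Kᶜ from hi)] at h1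
  exact cs.simple_ne_one i h1

lemma conj_eq_conj_proj {x : W} (hx : x ∈ parabolic cs K) (w : W) :
    w * x * w⁻¹ = hK.proj w * x * (hK.proj w)⁻¹ := by
  have hc := hK.commute_of_mem_parabolic hx (hK.compl.proj_mem w)
  calc w * x * w⁻¹ = hK.proj w * (hK.compl.proj w * x * (hK.compl.proj w)⁻¹) * (hK.proj w)⁻¹ := by
        conv_lhs => rw [← hK.proj_mul_proj_compl w]
        group
    _ = hK.proj w * x * (hK.proj w)⁻¹ := by rw [← hc.eq, mul_inv_cancel_right]

lemma normal_parabolic : (parabolic cs K).Normal :=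
  ⟨fun x hx w => by
    rw [hK.conj_eq_conj_proj hx]
    exact mul_mem (mul_mem (hK.proj_mem w) hx) (inv_mem (hK.proj_mem w))⟩

lemma image_conj_parabolic (w : W) :
    (fun x => w * x * w⁻¹) '' (parabolic cs K : Set W) = parabolic cs K := by
  ext x
  refine ⟨?_, fun hx => ⟨w⁻¹ * x * w, hK.normal_parabolic.conj_mem' x hx w, by group⟩⟩
  rintro ⟨y, hy, rfl⟩
  exact hK.normal_parabolic.conj_mem y hy w

lemma image_simple_inter_parabolic (I : Set B) :
    cs.simple '' I ∩ parabolic cs K = cs.simple '' (I ∩ K) := by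
  ext x
  constructor
  · rintro ⟨⟨i, hi, rfl⟩, hx⟩
    exact ⟨i, ⟨hi, hK.simple_mem_parabolic_iff.1 hx⟩, rfl⟩
  · rintro ⟨i, ⟨hi, hiK⟩, rfl⟩
    exact ⟨⟨i, hi, rfl⟩, simple_mem_parabolic cs hiK⟩

lemma conjSubsetsIn_inter {I J : Set B} (h : ConjSubsets cs I J) :
    ConjSubsetsIn cs K (I ∩ K) (J ∩ K) := by
  obtain ⟨w, hw⟩ := h
  have hinj : Function.Injective (fun x => w * x * w⁻¹) := fun x y h => by simpa using h
  refine ⟨hK.proj w, hK.proj_mem w, ?_⟩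
  rw [← Set.image_congr fun x hx =>
      hK.conj_eq_conj_proj ((hK.image_simple_inter_parabolic I).ge hx).2 w,
    ← hK.image_simple_inter_parabolic, Set.image_inter hinj, hw, hK.image_conj_parabolic,
    hK.image_simple_inter_parabolic]

lemma conjSubsets_of_conjSubsetsIn {I J : Set B} (h1 : ConjSubsetsIn cs K (I ∩ K) (J ∩ K))
    (h2 : ConjSubsetsIn cs Kᶜ (I ∩ Kᶜ) (J ∩ Kᶜ)) : ConjSubsets cs I J := by
  obtain ⟨w1, hw1, e1⟩ := h1
  obtain ⟨w2, hw2, e2⟩ := h2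
  have hsplit : ∀ X, cs.simple '' X = cs.simple '' (X ∩ K) ∪ cs.simple '' (X ∩ Kᶜ) := fun X => by
    rw [← Set.image_union, Set.inter_union_compl]
  refine ⟨w1 * w2, ?_⟩
  rw [hsplit I, hsplit J, Set.image_union, ← e1, ← e2]
  congr 1 <;> refine Set.image_congr fun x hx => ?_
  · rw [hK.conj_eq_conj_proj ((hK.image_simple_inter_parabolic I).ge hx).2,
      hK.proj_mul_of_mem hw1 hw2]
  · rw [hK.compl.conj_eq_conj_proj ((hK.compl.image_simple_inter_parabolic I).ge hx).2,
      hK.proj_compl_mul_of_mem hw1 hw2]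

lemma conjSubsets_iff {I J : Set B} :
    ConjSubsets cs I J ↔
      ConjSubsetsIn cs K (I ∩ K) (J ∩ K) ∧ ConjSubsetsIn cs Kᶜ (I ∩ Kᶜ) (J ∩ Kᶜ) :=
  ⟨fun h => ⟨hK.conjSubsetsIn_inter h, hK.compl.conjSubsetsIn_inter h⟩,
    fun h => hK.conjSubsets_of_conjSubsetsIn h.1 h.2⟩

/-- The isomorphism `W ≅ W_K × W_{Kᶜ}`, viewed as an embedding into `W × W`. -/
noncomputable def split : W →* W × W :=
  hK.proj.prod hK.compl.proj

lemma split_injective : Function.Injective hK.split := fun x y h => by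
  rw [← hK.proj_mul_proj_compl x, ← hK.proj_mul_proj_compl y]
  exact congrArg₂ (· * ·) congr(($h).1) congr(($h).2)

lemma range_split : Set.range hK.split = (parabolic cs K : Set W) ×ˢ (parabolic cs Kᶜ : Set W) := by
  ext ⟨a, b⟩
  refine ⟨?_, fun ⟨ha, hb⟩ => ⟨a * b, ?_⟩⟩
  · rintro ⟨w, hw⟩
    rw [← hw]
    exact ⟨hK.proj_mem w, hK.compl.proj_mem w⟩
  · exact Prod.ext (hK.proj_mul_of_mem ha hb) (hK.proj_compl_mul_of_mem ha hb)

lemma prod_subset_range_split {S₁ S₂ : Set W} (h₁ : S₁ ⊆ parabolic cs K)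
    (h₂ : S₂ ⊆ parabolic cs Kᶜ) : S₁ ×ˢ S₂ ⊆ Set.range hK.split :=
  hK.range_split ▸ Set.prod_mono h₁ h₂

lemma preimage_split_prod_eq_empty_iff {S₁ S₂ : Set W} (h₁ : S₁ ⊆ parabolic cs K)
    (h₂ : S₂ ⊆ parabolic cs Kᶜ) : hK.split ⁻¹' (S₁ ×ˢ S₂) = ∅ ↔ S₁ = ∅ ∨ S₂ = ∅ := by
  rw [← Set.prod_eq_empty_iff, ← Set.preimage_empty (f := hK.split),
    Set.preimage_eq_preimage' (hK.prod_subset_range_split h₁ h₂) (Set.empty_subset _)]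

lemma parabolic_eq_preimage_split (J : Set B) :
    (parabolic cs J : Set W) =
      hK.split ⁻¹' ((parabolic cs (J ∩ K) : Set W) ×ˢ (parabolic cs (J ∩ Kᶜ) : Set W)) := by
  ext w
  refine ⟨fun hw => ⟨hK.proj_mem_parabolic_inter hw, hK.compl.proj_mem_parabolic_inter hw⟩,
    fun ⟨h₁, h₂⟩ => ?_⟩
  rw [← hK.proj_mul_proj_compl w]
  exact mul_mem (parabolic_mono cs Set.inter_subset_left h₁)
    (parabolic_mono cs Set.inter_subset_left h₂)

lemma parabolicConjClass_eq_preimage_split (J : Set B) (v : W) :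
    parabolicConjClass cs J v =
      hK.split ⁻¹' (parabolicConjClass cs (J ∩ K) (hK.proj v) ×ˢ
        parabolicConjClass cs (J ∩ Kᶜ) (hK.compl.proj v)) := by
  ext x
  constructor
  · rintro ⟨u, hu, rfl⟩
    exact ⟨⟨hK.proj u, hK.proj_mem_parabolic_inter hu, by simp [split]⟩,
      ⟨hK.compl.proj u, hK.compl.proj_mem_parabolic_inter hu, by simp [split]⟩⟩
  · rintro ⟨⟨a, ha, hax⟩, ⟨b, hb, hbx⟩⟩
    have ha' := parabolic_mono cs Set.inter_subset_right ha
    have hb' := parabolic_mono cs Set.inter_subset_right hb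
    refine ⟨a * b, mul_mem (parabolic_mono cs Set.inter_subset_left ha)
      (parabolic_mono cs Set.inter_subset_left hb), hK.split_injective (Prod.ext ?_ ?_)⟩
    · show hK.proj (a * b * v * (a * b)⁻¹) = _
      rw [map_mul, map_mul, map_inv, hK.proj_mul_of_mem ha' hb', hax]
    · show hK.compl.proj (a * b * v * (a * b)⁻¹) = _
      rw [map_mul, map_mul, map_inv, hK.proj_compl_mul_of_mem ha' hb', hbx]

lemma setOf_isConj_inter_parabolic_eq_preimage_split (J : Set B) (w : W) :
    {x | IsConj w x} ∩ (parabolic cs J : Set W) =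
      hK.split ⁻¹' ((parabolicConjClass cs K (hK.proj w) ∩ parabolic cs (J ∩ K)) ×ˢ
        (parabolicConjClass cs Kᶜ (hK.compl.proj w) ∩ parabolic cs (J ∩ Kᶜ))) := by
  have h : {x | IsConj w x} = parabolicConjClass cs Set.univ w := by
    ext x
    simp [parabolicConjClass, parabolic_univ, isConj_iff]
  rw [h, hK.parabolicConjClass_eq_preimage_split, hK.parabolic_eq_preimage_split,
    ← Set.preimage_inter, Set.prod_inter_prod, Set.univ_inter, Set.univ_inter]

lemma isConjClassOfParabolic_preimage_split_iff {C₁ C₂ : Set W} (h₁ : C₁ ⊆ parabolic cs K)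
    (h₂ : C₂ ⊆ parabolic cs Kᶜ) (J : Set B) :
    IsConjClassOfParabolic cs J (hK.split ⁻¹' (C₁ ×ˢ C₂)) ↔
      IsConjClassOfParabolic cs (J ∩ K) C₁ ∧ IsConjClassOfParabolic cs (J ∩ Kᶜ) C₂ := by
  constructor
  · rintro ⟨v, hv, hC⟩
    have hv₁ := hK.proj_mem_parabolic_inter hv
    have hv₂ := hK.compl.proj_mem_parabolic_inter hv
    have hCl₁ := (parabolicConjClass_subset cs hv₁).trans (parabolic_mono cs Set.inter_subset_right)
    have hCl₂ := (parabolicConjClass_subset cs hv₂).trans (parabolic_mono cs Set.inter_subset_right)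
    change _ = parabolicConjClass cs J v at hC
    rw [hK.parabolicConjClass_eq_preimage_split, Set.preimage_eq_preimage'
      (hK.prod_subset_range_split h₁ h₂) (hK.prod_subset_range_split hCl₁ hCl₂)] at hC
    have hne : (C₁ ×ˢ C₂).Nonempty := hC ▸
      ⟨(hK.proj v, hK.compl.proj v), mem_parabolicConjClass_self cs _ _,
        mem_parabolicConjClass_self cs _ _⟩
    obtain ⟨hC₁, hC₂⟩ := (Set.prod_eq_prod_iff_of_nonempty hne).1 hC
    exact ⟨⟨_, hv₁, hC₁⟩, ⟨_, hv₂, hC₂⟩⟩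
  · rintro ⟨⟨v₁, hv₁, rfl⟩, ⟨v₂, hv₂, rfl⟩⟩
    have hv₁' := parabolic_mono cs Set.inter_subset_right hv₁
    have hv₂' := parabolic_mono cs Set.inter_subset_right hv₂
    refine ⟨v₁ * v₂, mul_mem (parabolic_mono cs Set.inter_subset_left hv₁)
      (parabolic_mono cs Set.inter_subset_left hv₂), ?_⟩
    change _ = parabolicConjClass cs J (v₁ * v₂)
    rw [hK.parabolicConjClass_eq_preimage_split, hK.proj_mul_of_mem hv₁' hv₂',
      hK.proj_compl_mul_of_mem hv₁' hv₂']
    rfl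

lemma preimage_split_prod_inter_parabolic (C₁ C₂ : Set W) (L : Set B) :
    hK.split ⁻¹' (C₁ ×ˢ C₂) ∩ parabolic cs L =
      hK.split ⁻¹' ((C₁ ∩ parabolic cs (L ∩ K)) ×ˢ (C₂ ∩ parabolic cs (L ∩ Kᶜ))) := by
  rw [hK.parabolic_eq_preimage_split, ← Set.preimage_inter, Set.prod_inter_prod]

lemma isCuspidalClass_preimage_split_iff {C₁ C₂ : Set W} (h₁ : C₁ ⊆ parabolic cs K)
    (h₂ : C₂ ⊆ parabolic cs Kᶜ) (J : Set B) :
    IsCuspidalClass cs J (hK.split ⁻¹' (C₁ ×ˢ C₂)) ↔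
      IsCuspidalClass cs (J ∩ K) C₁ ∧ IsCuspidalClass cs (J ∩ Kᶜ) C₂ := by
  have hempty : ∀ L : Set B, hK.split ⁻¹' (C₁ ×ˢ C₂) ∩ parabolic cs L = ∅ ↔
      C₁ ∩ parabolic cs (L ∩ K) = ∅ ∨ C₂ ∩ parabolic cs (L ∩ Kᶜ) = ∅ := fun L => by
    rw [hK.preimage_split_prod_inter_parabolic, hK.preimage_split_prod_eq_empty_iff
      (Set.inter_subset_left.trans h₁) (Set.inter_subset_left.trans h₂)]
  simp only [IsCuspidalClass, hK.isConjClassOfParabolic_preimage_split_iff h₁ h₂, hempty]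
  constructor
  · rintro ⟨⟨hC₁, hC₂⟩, hcusp⟩
    refine ⟨⟨hC₁, fun L hL => ?_⟩, ⟨hC₂, fun L hL => ?_⟩⟩
    · obtain ⟨L', hL', hL'₁, hL'₂⟩ := Set.exists_ssubset_inter_eq hL
      have := hcusp L' hL'
      rwa [hL'₁, hL'₂, Set.inter_eq_left.2 hC₂.subset, or_iff_left hC₂.nonempty.ne_empty] at this
    · obtain ⟨L', hL', hL'₂, hL'₁⟩ := Set.exists_ssubset_inter_eq (K := Kᶜ) hL
      have := hcusp L' hL'
      rw [compl_compl] at hL'₁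
      rwa [hL'₁, hL'₂, Set.inter_eq_left.2 hC₁.subset, or_iff_right hC₁.nonempty.ne_empty] at this
  · rintro ⟨⟨hC₁, hcusp₁⟩, ⟨hC₂, hcusp₂⟩⟩
    refine ⟨⟨hC₁, hC₂⟩, fun L hL => ?_⟩
    rcases Set.inter_ssubset_or_inter_compl_ssubset hL K with h | h
    · exact Or.inl (hcusp₁ _ h)
    · exact Or.inr (hcusp₂ _ h)

lemma isElementOf_iff (J : Set B) (w : W) :
    IsElementOf cs J w ↔
      IsElementIn cs K (J ∩ K) (hK.proj w) ∧ IsElementIn cs Kᶜ (J ∩ Kᶜ) (hK.compl.proj w) := by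
  rw [IsElementOf, hK.setOf_isConj_inter_parabolic_eq_preimage_split,
    hK.isCuspidalClass_preimage_split_iff
      (Set.inter_subset_left.trans (parabolicConjClass_subset cs (hK.proj_mem w)))
      (Set.inter_subset_left.trans (parabolicConjClass_subset cs (hK.compl.proj_mem w)))]
  simp only [IsElementIn, hK.proj_mem, hK.compl.proj_mem, true_and]
  rfl

/-- The map `π = (π₁, π₂)`. -/
def classProj : CoxeterClass cs → CoxeterClassIn cs K × CoxeterClassIn cs Kᶜ :=
  Quotient.lift (fun I => (classOfInter cs K I, classOfInter cs Kᶜ I))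
    (fun _ _ h => Prod.ext (Quotient.sound (hK.conjSubsets_iff.1 h).1)
      (Quotient.sound (hK.conjSubsets_iff.1 h).2))

lemma bijective_classProj : Function.Bijective hK.classProj := by
  constructor
  · rintro ⟨I⟩ ⟨J⟩ h
    obtain ⟨h₁, h₂⟩ := Prod.ext_iff.1 h
    exact Quotient.sound (hK.conjSubsets_iff.2 ⟨Quotient.exact h₁, Quotient.exact h₂⟩)
  · rintro ⟨⟨I₁, hI₁⟩, ⟨I₂, hI₂⟩⟩
    refine ⟨Quotient.mk _ (I₁ ∪ I₂), Prod.ext ?_ ?_⟩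
    · exact congrArg (Quotient.mk _) (Subtype.ext (Set.union_inter_eq_left_of_subset_compl hI₁ hI₂))
    · exact congrArg (Quotient.mk _) (Subtype.ext (Set.union_inter_compl_eq_right hI₁ hI₂))

lemma lambdaSetQ_eq_preimage_split (I : Set B) :
    lambdaSetQ cs (Quotient.mk (coxSetoid cs) I) =
      hK.split ⁻¹'
        (lambdaSetInQ cs K (classOfInter cs K I) ×ˢ lambdaSetInQ cs Kᶜ (classOfInter cs Kᶜ I)) := by
  ext w
  constructor
  · rintro ⟨J, hJ, hw⟩
    obtain ⟨hJ₁, hJ₂⟩ := hK.conjSubsets_iff.1 (Quotient.exact hJ)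
    obtain ⟨hw₁, hw₂⟩ := (hK.isElementOf_iff J w).1 hw
    exact ⟨⟨⟨J ∩ K, Set.inter_subset_right⟩, Quotient.sound hJ₁, hw₁⟩,
      ⟨⟨J ∩ Kᶜ, Set.inter_subset_right⟩, Quotient.sound hJ₂, hw₂⟩⟩
  · rintro ⟨⟨⟨J₁, hJ₁⟩, hJ₁I, hw₁⟩, ⟨⟨J₂, hJ₂⟩, hJ₂I, hw₂⟩⟩
    have e₁ := Set.union_inter_eq_left_of_subset_compl hJ₁ hJ₂
    have e₂ := Set.union_inter_compl_eq_right hJ₁ hJ₂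
    refine ⟨J₁ ∪ J₂, Quotient.sound (hK.conjSubsets_iff.2 ?_), (hK.isElementOf_iff _ w).2 ?_⟩
    · rw [e₁, e₂]
      exact ⟨Quotient.exact hJ₁I, Quotient.exact hJ₂I⟩
    · rw [e₁, e₂]
      exact ⟨hw₁, hw₂⟩

lemma card_lambdaSetQ (I : Set B) :
    Nat.card (lambdaSetQ cs (Quotient.mk (coxSetoid cs) I)) =
      Nat.card (lambdaSetInQ cs K (classOfInter cs K I)) *
        Nat.card (lambdaSetInQ cs Kᶜ (classOfInter cs Kᶜ I)) := by
  simp only [Nat.card_coe_set_eq]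
  rw [hK.lambdaSetQ_eq_preimage_split]
  exact (Set.ncard_preimage_of_injective_subset_range hK.split_injective
    (hK.prod_subset_range_split (lambdaSetInQ_subset_parabolic cs K _)
      (lambdaSetInQ_subset_parabolic cs Kᶜ _))).trans Set.ncard_prod

end IsDirectFactor

theorem statement2_general (cs : CoxeterSystem M W) (K1 K2 : Set B)
    (hU : K1 ∪ K2 = Set.univ) (hD : K1 ∩ K2 = ∅)
    (hcomm : ∀ i ∈ K1, ∀ j ∈ K2, Commute (cs.simple i) (cs.simple j)) :
    ∃ pi : CoxeterClass cs → CoxeterClassIn cs K1 × CoxeterClassIn cs K2,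
      Function.Bijective pi ∧
      (∀ I : Set B,
        pi (Quotient.mk (coxSetoid cs) I) =
          (Quotient.mk (coxSetoidIn cs K1) ⟨I ∩ K1, Set.inter_subset_right⟩,
           Quotient.mk (coxSetoidIn cs K2) ⟨I ∩ K2, Set.inter_subset_right⟩)) ∧
      (∀ I : Set B,
        Nat.card (lambdaSetQ cs (Quotient.mk (coxSetoid cs) I)) =
          Nat.card (lambdaSetInQ cs K1
              (Quotient.mk (coxSetoidIn cs K1) ⟨I ∩ K1, Set.inter_subset_right⟩)) *
          Nat.card (lambdaSetInQ cs K2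
              (Quotient.mk (coxSetoidIn cs K2) ⟨I ∩ K2, Set.inter_subset_right⟩))) := by
  obtain rfl : K1ᶜ = K2 := (IsCompl.of_eq hD hU).compl_eq
  have hK : IsDirectFactor cs K1 := hcomm
  exact ⟨hK.classProj, hK.bijective_classProj, fun _ => rfl, hK.card_lambdaSetQ⟩

/-- If `S = K₁ ⊔ K₂` with all simple reflections of `K₁` commuting with those
of `K₂`, then `λ ↦ (λ(I ∩ K₁), λ(I ∩ K₂))` is a well-defined bijection
`Λ(W) → Λ(W_{K₁}) × Λ(W_{K₂})`, and `|C(λ)| = |C(π₁ λ)| · |C(π₂ λ)|`. -/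
theorem statement2 [Fintype W] (cs : CoxeterSystem M W) (K1 K2 : Set B)
    (hU : K1 ∪ K2 = Set.univ) (hD : K1 ∩ K2 = ∅)
    (hcomm : ∀ i ∈ K1, ∀ j ∈ K2, Commute (cs.simple i) (cs.simple j)) :
    ∃ pi : CoxeterClass cs → CoxeterClassIn cs K1 × CoxeterClassIn cs K2,
      Function.Bijective pi ∧
      (∀ I : Set B,
        pi (Quotient.mk (coxSetoid cs) I) =
          (Quotient.mk (coxSetoidIn cs K1) ⟨I ∩ K1, Set.inter_subset_right⟩,
           Quotient.mk (coxSetoidIn cs K2) ⟨I ∩ K2, Set.inter_subset_right⟩)) ∧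
      (∀ I : Set B,
        Nat.card (lambdaSetQ cs (Quotient.mk (coxSetoid cs) I)) =
          Nat.card (lambdaSetInQ cs K1
              (Quotient.mk (coxSetoidIn cs K1) ⟨I ∩ K1, Set.inter_subset_right⟩)) *
          Nat.card (lambdaSetInQ cs K2
              (Quotient.mk (coxSetoidIn cs K2) ⟨I ∩ K2, Set.inter_subset_right⟩))) :=
  statement2_general cs K1 K2 hU hD hcomm
end

section
/- Let (W,S) be a finite Coxeter system and I,J ⊆ S. Then Σ_{w ∈ X_I} 1_{W_J}^W(w) = Σ_{b ∈ X_{IJ}} |W(I,J,b)|; that is, Φ(x_J)(x_I) equals the sum over the minimal double coset representatives b ∈ X_{IJ} of the cardinalities of the sets W(I,J,b). -/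
open scoped Classical

variable {B : Type*} {W : Type*} [Group W] {M : CoxeterMatrix B}

/-- `X_{IJ} = X_I⁻¹ ∩ X_J`: the minimal length representatives of the double cosets
`W_I \\ W / W_J`. -/
def doubleReps (cs : CoxeterSystem M W) (I J : Set B) : Set W :=
  (minReps cs I)⁻¹ ∩ minReps cs J

/-- `W(I,J,b) = {w ∈ W | w^J b⁻¹ = (w b⁻¹)_I}`, expressed through the (unique) parabolic
components `w = u·c` (`u ∈ X_J`, `c ∈ W_J`) and `w b⁻¹ = p·q` (`p ∈ X_I`, `q ∈ W_I`). -/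
def Wset (cs : CoxeterSystem M W) (I J : Set B) (b : W) : Set W :=
  {w : W | ∃ u c p q : W,
    u ∈ minReps cs J ∧ c ∈ parabolic cs J ∧ w = u * c ∧
    p ∈ minReps cs I ∧ q ∈ parabolic cs I ∧ w * b⁻¹ = p * q ∧ u * b⁻¹ = q}

/-!
Both sides count the same pairs. The left side counts pairs `(w, g)` with `w ∈ X_I`, `g ∈ X_J`
and `g⁻¹ w g ∈ W_J`. For such a pair, `v = w g` has parabolic components `v^J = g` and
`v_J = g⁻¹ w g`, and `g` lies in the double coset `W_I b W_J` of a unique `b ∈ X_{IJ}`, namely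
`b⁻¹ = (g⁻¹)^I`. The conditions defining `W(I,J,b)` then say exactly that `v^J ∈ W_I b` and
`v (v^J)⁻¹ ∈ X_I`, so `(w, g) ↦ (b, w g)` is a bijection onto the pairs `(b, v)` with
`b ∈ X_{IJ}` and `v ∈ W(I,J,b)`.

The Coxeter-theoretic input is that every coset `w W_K` contains exactly one element without right
descents in `K`, and that this element is length-additive against `W_K`. Both rest on the exchange
condition, which is derived from Tits' parity count of reflections in inversion sequences.
-/

theorem sum_indicator_natCard_setOf {α β : Type*} [Fintype α] [Fintype β] (s : Set α)
    (p : α → β → Prop) :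
    ∑ a, s.indicator (fun a => (Nat.card {b | p a b} : ℚ)) a =
      Nat.card {x : α × β | x.1 ∈ s ∧ p x.1 x.2} := by
  simp only [Set.indicator_apply, Nat.card_eq_fintype_card, Fintype.card_subtype,
    Set.mem_ofPred_eq]
  rw [← Finset.univ_product_univ, Finset.card_filter, Finset.sum_product, Nat.cast_sum]
  refine Finset.sum_congr rfl fun a _ => ?_
  split_ifs <;> simp [*]

namespace CoxeterSystem

variable (cs : CoxeterSystem M W)

local prefix:100 "s" => cs.simple
local prefix:100 "π" => cs.wordProd
local prefix:100 "ℓ" => cs.length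
local prefix:100 "ris" => cs.rightInvSeq

/-- Tits' permutation of `W × ZMod 2`: conjugate by `s i`, flipping the parity exactly at `s i`.
It factors through `W`, so the parity of the number of occurrences of a reflection in the right
inversion sequence of a word depends only on the product of the word. -/
noncomputable def inversionParityPerm (i : B) : Equiv.Perm (W × ZMod 2) :=
  Function.Involutive.toPerm (fun p => (s i * p.1 * s i, p.2 + if p.1 = s i then 1 else 0)) (by
    rintro ⟨u, e⟩
    have h : s i * u * s i = s i ↔ u = s i := by
      simp [mul_assoc, mul_eq_one_iff_eq_inv]
    simp only [Prod.mk.injEq, h]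
    refine ⟨by simp [mul_assoc], ?_⟩
    split_ifs <;> grind)

@[simp]
theorem inversionParityPerm_apply (i : B) (u : W) (e : ZMod 2) :
    cs.inversionParityPerm i (u, e) = (s i * u * s i, e + if u = s i then 1 else 0) :=
  rfl

theorem prod_map_inversionParityPerm_apply (ω : List B) (u : W) (e : ZMod 2) :
    (ω.map cs.inversionParityPerm).prod (u, e) = (π ω * u * (π ω)⁻¹, e + (ris ω).count u) := by
  induction ω generalizing u e with
  | nil => simp
  | cons i ω ih =>
    have hconj : π ω * u * (π ω)⁻¹ = s i ↔ (π ω)⁻¹ * s i * π ω = u := by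
      constructor <;> intro h <;> rw [← h] <;> group
    simp only [List.map_cons, List.prod_cons, Equiv.Perm.mul_apply, ih, inversionParityPerm_apply,
      hconj, wordProd_cons, rightInvSeq, List.count_cons, beq_iff_eq]
    refine Prod.ext (by simp [mul_assoc]) ?_
    split_ifs <;> simp [add_assoc]

theorem rightInvSeq_flatten_replicate (i j : B) (m : ℕ) :
    ris (List.replicate m [i, j]).flatten =
      ((List.range (2 * m)).map fun k => (s j * s i) ^ k * s j).reverse := by
  induction m with
  | zero => simp
  | succ m ih =>
    have hπ : π (List.replicate m [i, j]).flatten = (s i * s j) ^ m := by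
      simp [wordProd, List.map_flatten, List.prod_flatten, List.map_replicate]
    have hcomm : s j * (s i * s j) ^ m = (s j * s i) ^ m * s j :=
      (SemiconjBy.pow_right (by simp [SemiconjBy, mul_assoc]) m).eq
    have hinv : ((s i * s j) ^ m)⁻¹ = (s j * s i) ^ m := by simp [← inv_pow]
    rw [List.replicate_succ, List.flatten_cons, List.cons_append, List.cons_append,
      List.nil_append, rightInvSeq, rightInvSeq, ih, wordProd_cons, hπ,
      show 2 * (m + 1) = 2 * m + 1 + 1 by ring, List.range_succ, List.range_succ]
    simp only [List.map_append, List.map_cons, List.map_nil, List.reverse_append,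
      List.reverse_cons, List.reverse_nil, List.nil_append, List.cons_append]
    refine congrArg₂ _ ?_ (congrArg₂ _ ?_ rfl)
    · rw [mul_inv_rev, hinv, inv_simple, hcomm, show 2 * m + 1 = m + 1 + m by ring, pow_add,
        pow_succ]
      simp only [mul_assoc]
    · rw [hinv, mul_assoc, hcomm, two_mul, pow_add]
      simp only [mul_assoc]

theorem even_count_rightInvSeq_braid (i j : B) (u : W) :
    Even ((ris (List.replicate (M i j) [i, j]).flatten).count u) := by
  have hperiodic : ∀ k, (s j * s i) ^ (M i j + k) * s j = (s j * s i) ^ k * s j := by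
    simp [pow_add]
  rw [rightInvSeq_flatten_replicate, List.count_reverse, two_mul, List.range_add,
    List.map_append, List.count_append, List.map_map, Function.comp_def]
  simp only [hperiodic]
  exact ⟨_, rfl⟩

theorem isLiftable_inversionParityPerm : M.IsLiftable cs.inversionParityPerm := by
  intro i j
  have hprod : ((List.replicate (M i j) [i, j]).flatten.map cs.inversionParityPerm).prod =
      (cs.inversionParityPerm i * cs.inversionParityPerm j) ^ M i j := by
    simp [List.map_flatten, List.prod_flatten, List.map_replicate]
  rw [← hprod]
  ext ⟨u, e⟩ : 1
  rw [prod_map_inversionParityPerm_apply,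
    (ZMod.natCast_eq_zero_iff_even).mpr (cs.even_count_rightInvSeq_braid i j u)]
  simp [wordProd, List.map_flatten, List.prod_flatten, List.map_replicate]

theorem natCast_count_rightInvSeq_eq {ω ω' : List B} (h : π ω = π ω') (t : W) :
    ((ris ω).count t : ZMod 2) = (ris ω').count t := by
  have hlift : ∀ ω : List B, cs.lift ⟨_, cs.isLiftable_inversionParityPerm⟩ (π ω) =
      (ω.map cs.inversionParityPerm).prod := fun ω => by
    simp [wordProd, map_list_prod, List.map_map, Function.comp_def]
  have := congrArg (fun f : Equiv.Perm (W × ZMod 2) => (f (t, 0)).2)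
    ((hlift ω).symm.trans ((congrArg _ h).trans (hlift ω')))
  simpa [prod_map_inversionParityPerm_apply] using this

theorem exists_wordProd_eraseIdx_eq_mul_simple {ω : List B} {i : B}
    (hi : cs.IsRightDescent (π ω) i) : ∃ j < ω.length, π (ω.eraseIdx j) = π ω * s i := by
  -- `s i` occurs exactly once in `ris (μ ++ [i])` for a reduced word `μ` of `π ω * s i`, so it
  -- occurs an odd number of times in `ris ω`
  obtain ⟨μ, hμ, hμω⟩ := cs.exists_isReduced (π ω * s i)
  have hconcat : π (μ.concat i) = π ω := by
    rw [wordProd_concat, ← hμω, simple_mul_simple_cancel_right]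
  have hnotMem : s i ∉ ris μ := fun hmem => by
    have := (cs.isRightInversion_of_mem_rightInvSeq hμ hmem).2
    rw [← hμω, simple_mul_simple_cancel_right] at this
    exact lt_asymm hi this
  have hcount : ((ris ω).count (s i) : ZMod 2) = 1 := by
    have hmap : ((ris μ).map (MulAut.conj (s i))).count (s i) = (ris μ).count (s i) := by
      simpa using List.count_map_of_injective (ris μ) _ (MulAut.conj (s i)).injective (s i)
    rw [← cs.natCast_count_rightInvSeq_eq hconcat, rightInvSeq_concat, List.concat_eq_append,
      List.count_append, hmap, List.count_eq_zero.mpr hnotMem]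
    simp
  have hmem : s i ∈ ris ω :=
    List.count_pos_iff.mp (Nat.pos_of_ne_zero fun h0 => by simp [h0] at hcount)
  obtain ⟨j, hj, hget⟩ := List.getElem_of_mem hmem
  rw [length_rightInvSeq] at hj
  refine ⟨j, hj, ?_⟩
  rw [← wordProd_mul_getD_rightInvSeq, List.getD_eq_getElem _ 1 (by simpa using hj), hget]

theorem exists_sublist_isReduced_wordProd_eq (ω : List B) :
    ∃ ω' : List B, ω'.Sublist ω ∧ cs.IsReduced ω' ∧ π ω' = π ω := by
  induction ω using List.reverseRecOn with
  | nil => exact ⟨[], List.Sublist.refl _, by simp [IsReduced], rfl⟩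
  | append_singleton ω i ih =>
    obtain ⟨ω', hsub, hred, hπ⟩ := ih
    have hlen := cs.length_mul_simple (π ω') i
    rw [IsReduced] at hred
    rw [wordProd_append, wordProd_singleton, ← hπ]
    by_cases hi : cs.IsRightDescent (π ω') i
    · obtain ⟨j, hj, hπj⟩ := cs.exists_wordProd_eraseIdx_eq_mul_simple hi
      refine ⟨ω'.eraseIdx j, (List.eraseIdx_sublist _ _).trans (hsub.trans
        (List.sublist_append_left _ _)), ?_, hπj⟩
      rw [IsReduced, hπj, List.length_eraseIdx_of_lt hj]
      rw [IsRightDescent] at hi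
      omega
    · refine ⟨ω' ++ [i], hsub.append (List.Sublist.refl _), ?_, by
        rw [wordProd_append, wordProd_singleton]⟩
      rw [IsReduced, wordProd_append, wordProd_singleton, List.length_append, List.length_singleton]
      rw [IsRightDescent] at hi
      omega

variable {cs} {K : Set B}

theorem simple_mem_parabolic {i : B} (hi : i ∈ K) : s i ∈ parabolic cs K :=
  Subgroup.subset_closure (Set.mem_image_of_mem _ hi)

theorem wordProd_mem_parabolic {ω : List B} (hω : ∀ b ∈ ω, b ∈ K) : π ω ∈ parabolic cs K := by
  refine (parabolic cs K).list_prod_mem fun _ hx => ?_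
  obtain ⟨b, hb, rfl⟩ := List.mem_map.mp hx
  exact simple_mem_parabolic (hω b hb)

theorem exists_wordProd_eq_of_mem_parabolic {v : W} (hv : v ∈ parabolic cs K) :
    ∃ ω : List B, (∀ b ∈ ω, b ∈ K) ∧ π ω = v := by
  induction hv using Subgroup.closure_induction with
  | mem x hx =>
    obtain ⟨j, hj, rfl⟩ := hx
    exact ⟨[j], by simpa using hj, wordProd_singleton cs j⟩
  | one => exact ⟨[], by simp, wordProd_nil cs⟩
  | mul x y _ _ hx hy =>
    obtain ⟨α, hαK, rfl⟩ := hx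
    obtain ⟨β, hβK, rfl⟩ := hy
    exact ⟨α ++ β, by simpa [or_imp, forall_and] using ⟨hαK, hβK⟩, wordProd_append cs α β⟩
  | inv x _ hx =>
    obtain ⟨α, hαK, rfl⟩ := hx
    exact ⟨α.reverse, by simpa using hαK, wordProd_reverse cs α⟩

theorem exists_isReduced_of_mem_parabolic {v : W} (hv : v ∈ parabolic cs K) :
    ∃ ω : List B, (∀ b ∈ ω, b ∈ K) ∧ cs.IsReduced ω ∧ π ω = v := by
  obtain ⟨ω, hωK, rfl⟩ := exists_wordProd_eq_of_mem_parabolic hv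
  obtain ⟨ω', hsub, hred, hπ⟩ := cs.exists_sublist_isReduced_wordProd_eq ω
  exact ⟨ω', fun b hb => hωK b (hsub.subset hb), hred, hπ⟩

theorem length_mul_wordProd_of_forall_length_le {u : W}
    (hmin : ∀ v ∈ parabolic cs K, ℓ u ≤ ℓ (u * v)) {α : List B} (hαK : ∀ b ∈ α, b ∈ K)
    (hα : cs.IsReduced α) : ℓ (u * π α) = ℓ u + α.length := by
  induction α using List.reverseRecOn with
  | nil => simp
  | append_singleton α j ih =>
    have hαK' : ∀ b ∈ α, b ∈ K := fun b hb => hαK b (List.mem_append_left _ hb)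
    have hα' : cs.IsReduced α := by simpa using hα.take α.length
    have ih := ih hαK' hα'
    rw [wordProd_append, wordProd_singleton, ← mul_assoc, List.length_append,
      List.length_singleton]
    rcases cs.length_mul_simple (u * π α) j with h | h
    · omega
    exfalso
    obtain ⟨ωu, hωu, rfl⟩ := cs.exists_isReduced u
    rw [IsReduced] at hωu hα
    obtain ⟨k, hk, hπk⟩ := cs.exists_wordProd_eraseIdx_eq_mul_simple
      (ω := ωu ++ α) (i := j) (by rw [IsRightDescent, wordProd_append]; omega)
    rw [List.length_append] at hk
    rw [wordProd_append] at hπk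
    rcases lt_or_ge k ωu.length with hkω | hkω
    · -- deleting a letter of `ωu` moves `u` inside its coset to a shorter element
      rw [List.eraseIdx_append_of_lt_length hkω, wordProd_append] at hπk
      have hshort := cs.length_wordProd_le (ωu.eraseIdx k)
      rw [List.length_eraseIdx_of_lt hkω] at hshort
      have hcoset : π (ωu.eraseIdx k) = π ωu * (π α * s j * (π α)⁻¹) := by
        rw [← mul_assoc, ← mul_assoc, ← hπk]; group
      have := hmin _ (mul_mem (mul_mem (wordProd_mem_parabolic hαK')
        (simple_mem_parabolic (hαK j (by simp)))) (inv_mem (wordProd_mem_parabolic hαK')))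
      rw [← hcoset] at this
      omega
    · rw [List.eraseIdx_append_of_length_le hkω, wordProd_append, mul_assoc,
        mul_right_inj] at hπk
      have hshort := cs.length_wordProd_le (α.eraseIdx (k - ωu.length))
      rw [List.length_eraseIdx_of_lt (by omega), hπk] at hshort
      rw [wordProd_append, wordProd_singleton, List.length_append, List.length_singleton] at hα
      omega

theorem length_mul_of_forall_length_le {u : W} (hmin : ∀ v ∈ parabolic cs K, ℓ u ≤ ℓ (u * v))
    {v : W} (hv : v ∈ parabolic cs K) : ℓ (u * v) = ℓ u + ℓ v := by
  obtain ⟨α, hαK, hα, rfl⟩ := exists_isReduced_of_mem_parabolic hv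
  rw [length_mul_wordProd_of_forall_length_le hmin hαK hα, hα]

variable (cs K) in
theorem exists_inv_mul_mem_forall_length_le (w : W) :
    ∃ u, u⁻¹ * w ∈ parabolic cs K ∧ ∀ v ∈ parabolic cs K, ℓ u ≤ ℓ (u * v) := by
  obtain ⟨u, hu, hmin⟩ := (measure cs.length).wf.has_min {x | x⁻¹ * w ∈ parabolic cs K}
    ⟨w, by simp [one_mem]⟩
  refine ⟨u, hu, fun v hv => not_lt.mp (hmin (u * v) ?_)⟩
  simpa [mul_assoc] using mul_mem (inv_mem hv) hu

theorem forall_length_le_of_mem_minReps {u : W} (hu : u ∈ minReps cs K) :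
    ∀ v ∈ parabolic cs K, ℓ u ≤ ℓ (u * v) := by
  obtain ⟨u₀, hu₀, hmin⟩ := exists_inv_mul_mem_forall_length_le cs K u
  obtain ⟨α, hαK, hα, hπα⟩ := exists_isReduced_of_mem_parabolic hu₀
  rcases List.eq_nil_or_concat' α with rfl | ⟨α, j, rfl⟩
  · rwa [← mul_inv_cancel_left u₀ u, ← hπα, wordProd_nil, mul_one]
  -- otherwise `j ∈ K` would be a right descent of `u = u₀ * π (α ++ [j])`
  have hαK' : ∀ b ∈ α, b ∈ K := fun b hb => hαK b (List.mem_append_left _ hb)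
  have hα' : cs.IsReduced α := by simpa using hα.take α.length
  have hlen := length_mul_wordProd_of_forall_length_le hmin hαK hα
  have hlen' := length_mul_wordProd_of_forall_length_le hmin hαK' hα'
  have hu_eq : u = u₀ * π (α ++ [j]) := by rw [hπα, mul_inv_cancel_left]
  have hdesc := hu j (hαK j (by simp))
  rw [hu_eq, hlen, wordProd_append, wordProd_singleton, ← mul_assoc,
    simple_mul_simple_cancel_right, hlen'] at hdesc
  simp at hdesc

theorem length_mul_of_mem_minReps {u : W} (hu : u ∈ minReps cs K) {v : W}
    (hv : v ∈ parabolic cs K) : ℓ (u * v) = ℓ u + ℓ v :=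
  length_mul_of_forall_length_le (forall_length_le_of_mem_minReps hu) hv

variable (cs K) in
theorem existsUnique_mem_minReps_inv_mul_mem (w : W) :
    ∃! u, u ∈ minReps cs K ∧ u⁻¹ * w ∈ parabolic cs K := by
  obtain ⟨u, hu, hmin⟩ := exists_inv_mul_mem_forall_length_le cs K w
  refine ⟨u, ⟨fun i hi => ?_, hu⟩, fun u' ⟨hu'K, hu'⟩ => ?_⟩
  · exact lt_of_le_of_ne (hmin _ (simple_mem_parabolic hi)) (cs.length_mul_simple_ne u i).symm
  · have hx : u'⁻¹ * u ∈ parabolic cs K := by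
      simpa [mul_assoc] using mul_mem hu' (inv_mem hu)
    have hlen := length_mul_of_mem_minReps hu'K hx
    have hle := hmin _ (inv_mem hx)
    rw [mul_inv_cancel_left] at hlen
    rw [mul_inv_rev, inv_inv, mul_inv_cancel_left] at hle
    rw [← inv_mul_eq_one, ← cs.length_eq_zero_iff]
    omega

variable (cs K) in
/-- The parabolic component `w^K`. -/
noncomputable def minRep (w : W) : W :=
  (cs.existsUnique_mem_minReps_inv_mul_mem K w).exists.choose

theorem minRep_mem_minReps {w : W} : cs.minRep K w ∈ minReps cs K :=
  (cs.existsUnique_mem_minReps_inv_mul_mem K w).exists.choose_spec.1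

theorem inv_minRep_mul_mem_parabolic {w : W} : (cs.minRep K w)⁻¹ * w ∈ parabolic cs K :=
  (cs.existsUnique_mem_minReps_inv_mul_mem K w).exists.choose_spec.2

theorem minRep_eq_of_mem_minReps {u w : W} (hu : u ∈ minReps cs K)
    (h : u⁻¹ * w ∈ parabolic cs K) : cs.minRep K w = u :=
  (cs.existsUnique_mem_minReps_inv_mul_mem K w).unique ⟨minRep_mem_minReps,
    inv_minRep_mul_mem_parabolic⟩ ⟨hu, h⟩

theorem minRep_mul_eq {g w : W} (hg : g ∈ minReps cs K) (h : g⁻¹ * w * g ∈ parabolic cs K) :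
    cs.minRep K (w * g) = g :=
  minRep_eq_of_mem_minReps hg (by rwa [← mul_assoc])

/-- For `g ∈ X_J`, `((g⁻¹)^I)⁻¹` is the representative in `X_{IJ}` of the double coset
`W_I g W_J`. -/
theorem inv_minRep_inv_mem_minReps {I J : Set B} {g : W} (hg : g ∈ minReps cs J) :
    (cs.minRep I g⁻¹)⁻¹ ∈ minReps cs J := by
  set β := cs.minRep I g⁻¹
  have hκ : β⁻¹ * g⁻¹ ∈ parabolic cs I := inv_minRep_mul_mem_parabolic
  have hlen : ℓ g = ℓ β + ℓ (β⁻¹ * g⁻¹) := by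
    rw [← length_inv, ← length_mul_of_mem_minReps minRep_mem_minReps hκ, mul_inv_cancel_left]
  have hfactor : ∀ j, ℓ (g * s j) ≤ ℓ (β⁻¹ * g⁻¹) + ℓ (β⁻¹ * s j) := fun j => by
    have := cs.length_mul_le (β⁻¹ * g⁻¹)⁻¹ (β⁻¹ * s j)
    rw [length_inv] at this
    simpa [mul_assoc] using this
  intro j hj
  have hne := cs.length_mul_simple_ne β⁻¹ j
  have := hg j hj
  have := hfactor j
  rw [length_inv] at hne ⊢
  omega

theorem mem_Wset_iff {I J : Set B} {b v : W} :
    v ∈ Wset cs I J b ↔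
      cs.minRep J v * b⁻¹ ∈ parabolic cs I ∧ v * (cs.minRep J v)⁻¹ ∈ minReps cs I := by
  constructor
  · rintro ⟨u, c, p, q, hu, hc, rfl, hp, hq, hpq, rfl⟩
    have hp' : u * c * u⁻¹ = p := by
      calc u * c * u⁻¹ = u * c * b⁻¹ * (u * b⁻¹)⁻¹ := by group
        _ = p := by rw [hpq]; group
    rw [minRep_eq_of_mem_minReps hu (by rwa [inv_mul_cancel_left]), hp']
    exact ⟨hq, hp⟩
  · rintro ⟨hq, hp⟩
    exact ⟨_, _, _, _, minRep_mem_minReps, inv_minRep_mul_mem_parabolic,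
      (mul_inv_cancel_left _ _).symm, hp, hq, by group, rfl⟩

noncomputable def conjugatingPairsEquivWset (I J : Set B) :
    {x : W × W | x.1 ∈ minReps cs I ∧ (x.2 ∈ minReps cs J ∧ x.2⁻¹ * x.1 * x.2 ∈ parabolic cs J)} ≃
      {y : W × W | y.1 ∈ doubleReps cs I J ∧ y.2 ∈ Wset cs I J y.1} where
  toFun x := ⟨((cs.minRep I x.1.2⁻¹)⁻¹, x.1.1 * x.1.2), by
    obtain ⟨⟨w, g⟩, hw, hg, hc⟩ := x
    refine ⟨⟨by simpa using minRep_mem_minReps, inv_minRep_inv_mem_minReps hg⟩,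
      mem_Wset_iff.mpr ?_⟩
    rw [minRep_mul_eq hg hc, inv_inv, mul_inv_cancel_right]
    exact ⟨by simpa using inv_mem (inv_minRep_mul_mem_parabolic (w := g⁻¹)), hw⟩⟩
  invFun y := ⟨(y.1.2 * (cs.minRep J y.1.2)⁻¹, cs.minRep J y.1.2), by
    obtain ⟨⟨b, v⟩, -, hv⟩ := y
    exact ⟨(mem_Wset_iff.mp hv).2, minRep_mem_minReps, by
      simpa [mul_assoc] using inv_minRep_mul_mem_parabolic⟩⟩
  left_inv x := by
    obtain ⟨⟨w, g⟩, -, hg, hc⟩ := x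
    ext <;> simp [minRep_mul_eq hg hc]
  right_inv y := by
    obtain ⟨⟨b, v⟩, ⟨hb, -⟩, hv⟩ := y
    have hrep : cs.minRep I (cs.minRep J v)⁻¹ = b⁻¹ :=
      minRep_eq_of_mem_minReps hb (by simpa using inv_mem (mem_Wset_iff.mp hv).1)
    ext <;> simp [hrep]

end CoxeterSystem

open CoxeterSystem

/-- `Φ(x_J)(x_I) = Σ_{w ∈ X_I} 1_{W_J}^W(w) = Σ_{b ∈ X_{IJ}} |W(I,J,b)|`. -/
theorem statement14 [Fintype W] (cs : CoxeterSystem M W) (I J : Set B) :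
    ∑ w : W, (minReps cs I).indicator (indTriv cs J) w
      = ∑ b : W, (doubleReps cs I J).indicator
          (fun b => (Nat.card (Wset cs I J b) : ℚ)) b := by
  calc _ = (Nat.card {x : W × W | x.1 ∈ minReps cs I ∧
          (x.2 ∈ minReps cs J ∧ x.2⁻¹ * x.1 * x.2 ∈ parabolic cs J)} : ℚ) :=
        sum_indicator_natCard_setOf _ fun w g => g ∈ minReps cs J ∧ g⁻¹ * w * g ∈ parabolic cs J
    _ = Nat.card {y : W × W | y.1 ∈ doubleReps cs I J ∧ y.2 ∈ Wset cs I J y.1} :=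
        congrArg _ (Nat.card_congr (conjugatingPairsEquivWset I J))
    _ = _ := (sum_indicator_natCard_setOf _ fun b v => v ∈ Wset cs I J b).symm
end
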